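/- arXiv:1701.05937 — 7 statements merged into one kernel-verified Lean document; each statement's English description precedes it below -/
import Mathlib

section
/- Let (A, ⊗, 1) be a symmetric monoidal category and let η : 1 → F and η' : 1 → F' be right-idempotents (i.e., F ⊗ η : F → F ⊗ F and F' ⊗ η' : F' → F' ⊗ F' are isomorphisms, equal to η ⊗ F resp. η' ⊗ F'). If there exists a morphism φ : F → F' with φ ∘ η = η', then φ is unique and equals (η ⊗ F')⁻¹ ∘ (F ⊗ η'). -/
open CategoryTheory MonoidalCategory

universe v u

variable {A : Type u} [Category.{v} A] [MonoidalCategory A]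

/-- The morphism `X ⊗ η : X ⟶ X ⊗ G` (unitor isomorphisms inserted). -/
def lwhisk (X : A) {G : A} (η : 𝟙_ A ⟶ G) : X ⟶ X ⊗ G := (ρ_ X).inv ≫ X ◁ η

/-- The morphism `η ⊗ X : X ⟶ G ⊗ X` (unitor isomorphisms inserted). -/
def rwhisk {G : A} (η : 𝟙_ A ⟶ G) (X : A) : X ⟶ G ⊗ X := (λ_ X).inv ≫ η ▷ X

/-- A right-idempotent: `F ⊗ η = η ⊗ F` is an isomorphism `F ≅ F ⊗ F`. -/
def IsRightIdem {F : A} (η : 𝟙_ A ⟶ F) : Prop :=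
  lwhisk F η = rwhisk η F ∧ IsIso (lwhisk F η)

theorem stmt0 [SymmetricCategory A] {F F' : A} (η : 𝟙_ A ⟶ F) (η' : 𝟙_ A ⟶ F')
    (h : IsRightIdem η) (h' : IsRightIdem η') [IsIso (rwhisk η F')]
    (φ : F ⟶ F') (hφ : η ≫ φ = η') :
    φ = lwhisk F η' ≫ inv (rwhisk η F') ∧
      ∀ ψ : F ⟶ F', η ≫ ψ = η' → ψ = φ := by
  have key : ∀ ψ : F ⟶ F', η ≫ ψ = η' → ψ = lwhisk F η' ≫ inv (rwhisk η F') := by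
    intro ψ hψ
    rw [IsIso.eq_comp_inv]
    calc ψ ≫ rwhisk η F'
        = (λ_ F).inv ≫ (𝟙_ A ◁ ψ) ≫ η ▷ F' := by
          rw [rwhisk, ← Category.assoc, leftUnitor_inv_naturality, Category.assoc]
      _ = (λ_ F).inv ≫ (η ▷ F) ≫ (F ◁ ψ) := by rw [whisker_exchange]
      _ = lwhisk F η ≫ (F ◁ ψ) := by rw [h.1, rwhisk]; simp
      _ = lwhisk F η' := by
          rw [lwhisk, lwhisk, Category.assoc, ← MonoidalCategory.whiskerLeft_comp, hψ]
  exact ⟨key φ hφ, fun ψ hψ => (key ψ hψ).trans (key φ hφ).symm⟩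
end

section
/- Let (A, ⊗, 1) be a symmetric monoidal category and let η : 1 → F and η' : 1 → F' be right-idempotents. The following are equivalent: (i) every object of the form F' ⊗ Y is isomorphic to some F ⊗ Z (i.e., F' ⊗ A ⊆ F ⊗ A as essential images); (ii) there exists an isomorphism F' ≅ F ⊗ F'; (iii) η ⊗ F' : F' → F ⊗ F' is an isomorphism; (iv) there exists a morphism φ : F → F' with φ ∘ η = η'. -/
open CategoryTheory MonoidalCategory Limits

universe v u

variable {A : Type u} [Category.{v} A] [MonoidalCategory A]

lemma rwhisk_nat {G : A} (η : 𝟙_ A ⟶ G) {X Y : A} (f : X ⟶ Y) :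
    f ≫ rwhisk η Y = rwhisk η X ≫ G ◁ f := by
  simp only [rwhisk, Category.assoc, ← whisker_exchange]
  rw [leftUnitor_inv_naturality_assoc]

lemma lr_eq {F F' : A} (η : 𝟙_ A ⟶ F) (η' : 𝟙_ A ⟶ F') :
    η ≫ lwhisk F η' = η' ≫ rwhisk η F' := by
  simp only [lwhisk, rwhisk]
  rw [leftUnitor_inv_naturality_assoc, rightUnitor_inv_naturality_assoc,
    whisker_exchange, unitors_inv_equal]

lemma rwhisk_tensor_eq {F : A} (η : 𝟙_ A ⟶ F) (Z : A) :
    rwhisk η (F ⊗ Z) = (rwhisk η F) ▷ Z ≫ (α_ F F Z).hom := by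
  simp [rwhisk]

lemma rwhisk_tensor_iso {F : A} {η : 𝟙_ A ⟶ F} (h : IsRightIdem η) (Z : A) :
    IsIso (rwhisk η (F ⊗ Z)) := by
  have h2 : IsIso (rwhisk η F) := h.1 ▸ h.2
  rw [rwhisk_tensor_eq]
  infer_instance

lemma rwhisk_iso_of_retract {F : A} (η : 𝟙_ A ⟶ F) {X Z : A} (i : X ⟶ Z) (r : Z ⟶ X)
    (hir : i ≫ r = 𝟙 X) (hZ : IsIso (rwhisk η Z)) : IsIso (rwhisk η X) := by
  refine ⟨F ◁ i ≫ inv (rwhisk η Z) ≫ r, ?_, ?_⟩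
  · rw [← Category.assoc, ← Category.assoc, ← rwhisk_nat]
    simp [hir]
  · rw [Category.assoc, Category.assoc, rwhisk_nat η r, ← Category.assoc (inv (rwhisk η Z))]
    simp [← MonoidalCategory.whiskerLeft_comp, hir]

lemma rwhisk_iso_of_iso {G : A} (η : 𝟙_ A ⟶ G) {X Y : A} (e : X ≅ Y)
    (hY : IsIso (rwhisk η Y)) : IsIso (rwhisk η X) :=
  rwhisk_iso_of_retract η e.hom e.inv e.hom_inv_id hY

theorem stmt1 [SymmetricCategory A] {F F' : A} (η : 𝟙_ A ⟶ F) (η' : 𝟙_ A ⟶ F')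
    (h : IsRightIdem η) (h' : IsRightIdem η') :
    List.TFAE [
      ∀ Y : A, ∃ Z : A, Nonempty ((F' ⊗ Y : A) ≅ F ⊗ Z),
      Nonempty (F' ≅ F ⊗ F'),
      IsIso (rwhisk η F'),
      ∃ φ : F ⟶ F', η ≫ φ = η'] := by
  tfae_have 1 → 3 := by
    intro h1
    obtain ⟨Z, ⟨e⟩⟩ := h1 (𝟙_ A)
    exact rwhisk_iso_of_iso η ((ρ_ F').symm ≪≫ e) (rwhisk_tensor_iso h Z)
  tfae_have 3 → 2 := fun h3 => ⟨asIso (rwhisk η F')⟩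
  tfae_have 2 → 1 := by
    rintro ⟨e⟩ Y
    exact ⟨F' ⊗ Y, ⟨whiskerRightIso e Y ≪≫ α_ F F' Y⟩⟩
  tfae_have 3 → 4 := by
    intro h3
    refine ⟨lwhisk F η' ≫ inv (rwhisk η F'), ?_⟩
    rw [← Category.assoc, lr_eq]
    simp
  tfae_have 4 → 3 := by
    rintro ⟨φ, hφ⟩
    have hF' : IsIso (rwhisk η' F') := h'.1 ▸ h'.2
    refine rwhisk_iso_of_retract η (rwhisk η F') (φ ▷ F' ≫ inv (rwhisk η' F')) ?_
      (rwhisk_tensor_iso h F')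
    rw [← Category.assoc]
    have : rwhisk η F' ≫ φ ▷ F' = rwhisk η' F' := by
      simp [rwhisk, ← comp_whiskerRight, hφ]
    rw [this]
    simp
  tfae_finish
end

section
/- Let (A, ⊗, 1) be a symmetric monoidal category with right-idempotent η : 1 → F. For every object X of A, the morphism η ⊗ X : X → F ⊗ X is an isomorphism if and only if X is isomorphic to F ⊗ Y for some object Y. -/
open CategoryTheory MonoidalCategory Limits

universe v u

variable {A : Type u} [Category.{v} A] [MonoidalCategory A]

theorem stmt2 [SymmetricCategory A] {F : A} (η : 𝟙_ A ⟶ F) (h : IsRightIdem η) (X : A) :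
    IsIso (rwhisk η X) ↔ ∃ Y : A, Nonempty (X ≅ F ⊗ Y) := by
  constructor
  · intro hi
    exact ⟨X, ⟨asIso (rwhisk η X)⟩⟩
  · rintro ⟨Y, ⟨e⟩⟩
    obtain ⟨heq, hiso⟩ := h
    rw [heq] at hiso
    have hF : IsIso (η ▷ F) := by
      have h1 : η ▷ F = (λ_ F).hom ≫ rwhisk η F := by simp [rwhisk]
      rw [h1]; infer_instance
    have hFY : IsIso (η ▷ (F ⊗ Y)) := by
      have h2 : η ▷ (F ⊗ Y) = (α_ (𝟙_ A) F Y).inv ≫ (η ▷ F) ▷ Y ≫ (α_ F F Y).hom := by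
        simp
      rw [h2]; infer_instance
    have hR : IsIso (rwhisk η (F ⊗ Y)) := by
      rw [rwhisk]; infer_instance
    have key : rwhisk η X = e.hom ≫ rwhisk η (F ⊗ Y) ≫ F ◁ e.inv := by
      simp only [rwhisk]
      slice_rhs 1 2 => rw [show e.hom ≫ (λ_ (F ⊗ Y)).inv = (λ_ X).inv ≫ (𝟙_ A) ◁ e.hom by simp]
      slice_rhs 2 3 => rw [whisker_exchange]
      simp
    rw [key]
    infer_instance
end

section
/- Let A be an abelian symmetric monoidal category in which the tensor is additive in each variable, and let η : 1 → F be a morphism such that F ⊗ η : F → F ⊗ F is an isomorphism. If X is an object with F ⊗ X = 0, and Y is an object such that η ⊗ Y : Y → F ⊗ Y is an isomorphism, then Hom_A(X, Y) = 0. -/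
open CategoryTheory MonoidalCategory Limits

universe v u

variable {A : Type u} [Category.{v} A] [MonoidalCategory A]

/-- An object `F` is flat if `F ⊗ −` is exact. -/
def IsFlat (F : A) : Prop :=
  Nonempty (PreservesFiniteLimits (tensorLeft F)) ∧
    Nonempty (PreservesFiniteColimits (tensorLeft F))

theorem stmt5 [Abelian A] [MonoidalPreadditive A] [SymmetricCategory A]
    {F X Y : A} (η : 𝟙_ A ⟶ F) (hη : IsIso (lwhisk F η))
    (hX : IsZero (F ⊗ X : A)) (hY : IsIso (rwhisk η Y)) :
    ∀ f : X ⟶ Y, f = 0 := by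
  intro f
  have hnat : f ≫ rwhisk η Y = rwhisk η X ≫ (F ◁ f) := by
    simp [rwhisk, ← whisker_exchange]
  have hz : (F ◁ f : F ⊗ X ⟶ F ⊗ Y) = 0 := hX.eq_of_src _ _
  rw [hz, Limits.comp_zero] at hnat
  exact (cancel_mono (rwhisk η Y)).mp (by simp [hnat])
end

section
/- Let A be an abelian symmetric monoidal category with ⊗ additive in each variable, and let η : 1 → F be a morphism such that F is flat (F ⊗ − is exact) and F ⊗ η : F → F ⊗ F is an isomorphism. Then automatically F ⊗ η = η ⊗ F, i.e., F is a right-idempotent. -/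
open CategoryTheory MonoidalCategory Limits

universe v u

variable {A : Type u} [Category.{v} A] [MonoidalCategory A]

/-- Naturality of `lwhisk`. -/
lemma lwhisk_natural {X Y G : A} (η : 𝟙_ A ⟶ G) (f : X ⟶ Y) :
    f ≫ lwhisk Y η = lwhisk X η ≫ f ▷ G := by
  simp [lwhisk, whisker_exchange]

theorem stmt6 [Abelian A] [MonoidalPreadditive A] [SymmetricCategory A]
    {F : A} (η : 𝟙_ A ⟶ F) (hflat : IsFlat F) (hη : IsIso (lwhisk F η)) :
    lwhisk F η = rwhisk η F := by
  -- via the braiding, `rwhisk η F = lwhisk F η ≫ β`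
  have h12 : rwhisk η F = lwhisk F η ≫ (β_ F F).hom := by
    simp only [lwhisk, rwhisk, Category.assoc,
      BraidedCategory.braiding_naturality_right]
    have hb : (ρ_ F).inv ≫ (β_ F (𝟙_ A)).hom = (λ_ F).inv := by
      rw [← cancel_mono (λ_ F).hom, Category.assoc, braiding_leftUnitor]
      simp
    rw [← hb, Category.assoc]
  have hη2 : IsIso (rwhisk η F) := by rw [h12]; infer_instance
  -- both maps agree after precomposing with η
  have hcomm : η ≫ lwhisk F η = η ≫ rwhisk η F := by
    simp only [lwhisk, rwhisk]
    rw [← Category.assoc, ← Category.assoc, rightUnitor_inv_naturality,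
      leftUnitor_inv_naturality, Category.assoc, Category.assoc,
      whisker_exchange, unitors_inv_equal]
  -- cancel the epi `rwhisk η F` to find the two whiskered maps agree
  have hwhisk : lwhisk F η ▷ F = rwhisk η F ▷ F := by
    have h2 : rwhisk η F ≫ lwhisk F η ▷ F = rwhisk η F ≫ rwhisk η F ▷ F := by
      simp only [rwhisk, Category.assoc, ← comp_whiskerRight, hcomm]
    exact (cancel_epi (rwhisk η F)).mp h2
  -- `lwhisk (F ⊗ F) η` is an isomorphism
  have hFη : IsIso (F ◁ η) := by
    have : F ◁ η = (ρ_ F).hom ≫ lwhisk F η := by simp [lwhisk]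
    rw [this]; infer_instance
  have hFFη : IsIso (F ◁ (F ◁ η)) := (tensorLeft F).map_isIso _
  have hL : IsIso (lwhisk (F ⊗ F) η) := by
    have : lwhisk (F ⊗ F) η =
        (ρ_ (F ⊗ F)).inv ≫ (α_ F F (𝟙_ A)).hom ≫ F ◁ (F ◁ η) ≫ (α_ F F F).inv := by
      simp [lwhisk]
    rw [this]; infer_instance
  -- conclude by cancelling the mono `lwhisk (F ⊗ F) η`
  have : lwhisk F η ≫ lwhisk (F ⊗ F) η = rwhisk η F ≫ lwhisk (F ⊗ F) η := by
    rw [lwhisk_natural, lwhisk_natural, hwhisk]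
  exact (cancel_mono (lwhisk (F ⊗ F) η)).mp this
end

section
/- Let A be an abelian symmetric monoidal category with ⊗ additive in each variable, and let F, F' be flat right-idempotents (η : 1 → F, η' : 1 → F' with F, F' flat and F ⊗ η, F' ⊗ η' isomorphisms). Then F ≤ F' (i.e., η ⊗ F' : F' → F ⊗ F' is an isomorphism) if and only if Ker(F ⊗ −) ⊆ Ker(F' ⊗ −), i.e., for every object M, F ⊗ M = 0 implies F' ⊗ M = 0. -/
open CategoryTheory MonoidalCategory Limits

universe v u

variable {A : Type u} [Category.{v} A] [MonoidalCategory A]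

/-- `η ▷ X` expressed via `X ◁ η` and braidings. -/
lemma rwhisk_eq_braid [BraidedCategory A] {G : A} (η : 𝟙_ A ⟶ G) (X : A) :
    η ▷ X = (β_ X (𝟙_ A)).inv ≫ (X ◁ η) ≫ (β_ X G).hom := by
  rw [BraidedCategory.braiding_naturality_right, Iso.inv_hom_id_assoc]

theorem stmt7 [Abelian A] [MonoidalPreadditive A] [SymmetricCategory A]
    {F F' : A} (η : 𝟙_ A ⟶ F) (η' : 𝟙_ A ⟶ F')
    (hF : IsFlat F) (hη : IsIso (lwhisk F η))
    (hF' : IsFlat F') (hη' : IsIso (lwhisk F' η')) :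
    IsIso (rwhisk η F') ↔ ∀ M : A, IsZero (F ⊗ M : A) → IsZero (F' ⊗ M : A) := by
  obtain ⟨⟨hFl⟩, ⟨hFc⟩⟩ := hF
  obtain ⟨⟨hF'l⟩, ⟨hF'c⟩⟩ := hF'
  haveI := hFl; haveI := hFc; haveI := hF'l; haveI := hF'c
  have hηF : IsIso (F ◁ η) := by
    have : F ◁ η = (ρ_ F).hom ≫ lwhisk F η := by simp [lwhisk]
    rw [this]; infer_instance
  constructor
  · intro h M hM
    -- F' ⊗ M ≅ (F ⊗ F') ⊗ M ≅ (F' ⊗ F) ⊗ M ≅ F' ⊗ (F ⊗ M)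
    have e : F' ⊗ M ≅ F' ⊗ (F ⊗ M) :=
      whiskerRightIso (asIso (rwhisk η F')) M ≪≫ whiskerRightIso (β_ F F') M ≪≫ α_ F' F M
    exact ((tensorLeft F').map_isZero hM).of_iso e
  · intro h
    -- First show `F' ◁ η` is an isomorphism.
    set K := kernel η
    set Co := cokernel η
    -- F ⊗ K = 0
    have hFK : IsZero (F ⊗ K : A) := by
      have e : F ⊗ K ≅ kernel (F ◁ η) := PreservesKernel.iso (tensorLeft F) η
      have : IsZero (kernel (F ◁ η) : A) := by
        haveI : Mono (F ◁ η) := inferInstance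
        exact (isZero_zero A).of_iso (kernel.ofMono (F ◁ η))
      exact this.of_iso e
    have hFC : IsZero (F ⊗ Co : A) := by
      have e : F ⊗ Co ≅ cokernel (F ◁ η) := PreservesCokernel.iso (tensorLeft F) η
      have : IsZero (cokernel (F ◁ η) : A) := by
        haveI : Epi (F ◁ η) := inferInstance
        exact (isZero_zero A).of_iso (cokernel.ofEpi (F ◁ η))
      exact this.of_iso e
    have hF'K : IsZero (F' ⊗ K : A) := h K hFK
    have hF'C : IsZero (F' ⊗ Co : A) := h Co hFC
    have hmono : Mono (F' ◁ η) := by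
      apply Preadditive.mono_of_kernel_iso_zero
      exact (PreservesKernel.iso (tensorLeft F') η).symm ≪≫ hF'K.isoZero
    have hepi : Epi (F' ◁ η) := by
      apply Preadditive.epi_of_cokernel_iso_zero
      exact (PreservesCokernel.iso (tensorLeft F') η).symm ≪≫ hF'C.isoZero
    haveI : IsIso (F' ◁ η) := isIso_of_mono_of_epi _
    have : rwhisk η F' = (λ_ F').inv ≫ (β_ F' (𝟙_ A)).inv ≫ (F' ◁ η) ≫ (β_ F' F).hom := by
      rw [rwhisk, rwhisk_eq_braid]
    rw [this]
    infer_instance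
end

section
/- Let A be an abelian symmetric monoidal category with ⊗ additive in each variable, and let F, F' be flat right-idempotents. Then F and F' are isomorphic as objects under 1 (there is an isomorphism φ : F ≅ F' with φ ∘ η = η') if and only if Ker(F ⊗ −) = Ker(F' ⊗ −). -/
open CategoryTheory MonoidalCategory Limits

universe v u

variable {A : Type u} [Category.{v} A] [MonoidalCategory A]

/-- If `F` is flat, `η' : 1 ⟶ F'` is a flat right-idempotent, and every object killed by
`F' ⊗ −` is killed by `F ⊗ −`, then `F ⊗ η'` is an isomorphism. -/
lemma aux8 [Abelian A] [MonoidalPreadditive A]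
    {F F' : A} (η' : 𝟙_ A ⟶ F') (hF : IsFlat F) (hη' : IsIso (lwhisk F' η'))
    (hF' : IsFlat F')
    (h : ∀ M : A, IsZero (F' ⊗ M : A) → IsZero (F ⊗ M : A)) :
    IsIso (lwhisk F η') := by
  obtain ⟨⟨hFl⟩, ⟨hFc⟩⟩ := hF
  obtain ⟨⟨hF'l⟩, ⟨hF'c⟩⟩ := hF'
  have hmap : (tensorLeft F').map η' = F' ◁ η' := rfl
  have hiso : IsIso ((tensorLeft F').map η') := by
    rw [hmap]
    have : F' ◁ η' = (ρ_ F').hom ≫ lwhisk F' η' := by simp [lwhisk]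
    rw [this]; infer_instance
  -- kernel
  have hK : IsZero ((tensorLeft F').obj (kernel η')) :=
    IsZero.of_iso (isZero_zero A)
      ((PreservesKernel.iso (tensorLeft F') η') ≪≫ kernel.ofMono _)
  have hK' : IsZero ((tensorLeft F).obj (kernel η')) := h _ hK
  have hmono : Mono ((tensorLeft F).map η') :=
    Preadditive.mono_of_kernel_iso_zero
      ((PreservesKernel.iso (tensorLeft F) η').symm ≪≫ hK'.isoZero)
  -- cokernel
  have hC : IsZero ((tensorLeft F').obj (cokernel η')) :=
    IsZero.of_iso (isZero_zero A)
      ((PreservesCokernel.iso (tensorLeft F') η') ≪≫ cokernel.ofEpi _)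
  have hC' : IsZero ((tensorLeft F).obj (cokernel η')) := h _ hC
  have hepi : Epi ((tensorLeft F).map η') :=
    Preadditive.epi_of_cokernel_iso_zero
      ((PreservesCokernel.iso (tensorLeft F) η').symm ≪≫ hC'.isoZero)
  have : IsIso ((tensorLeft F).map η') := isIso_of_mono_of_epi _
  have hm : (tensorLeft F).map η' = F ◁ η' := rfl
  rw [hm] at this
  unfold lwhisk
  infer_instance

lemma aux8' [Abelian A] [MonoidalPreadditive A] [SymmetricCategory A]
    {F F' : A} (η : 𝟙_ A ⟶ F) (η' : 𝟙_ A ⟶ F') :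
    η ≫ lwhisk F η' ≫ (β_ F F').hom = η' ≫ lwhisk F' η := by
  simp [lwhisk]
  rw [reassoc_of% (leftUnitor_inv_naturality η), reassoc_of% (rightUnitor_inv_naturality η'),
    whisker_exchange, unitors_inv_equal]

theorem stmt8 [Abelian A] [MonoidalPreadditive A] [SymmetricCategory A]
    {F F' : A} (η : 𝟙_ A ⟶ F) (η' : 𝟙_ A ⟶ F')
    (hF : IsFlat F) (hη : IsIso (lwhisk F η))
    (hF' : IsFlat F') (hη' : IsIso (lwhisk F' η')) :
    (∃ φ : F ≅ F', η ≫ φ.hom = η') ↔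
      ∀ M : A, (IsZero (F ⊗ M : A) ↔ IsZero (F' ⊗ M : A)) := by
  constructor
  · rintro ⟨φ, -⟩ M
    constructor
    · exact fun hz => hz.of_iso ((tensorRight M).mapIso φ).symm
    · exact fun hz => hz.of_iso ((tensorRight M).mapIso φ)
  · intro h
    have h1 : IsIso (lwhisk F η') := aux8 η' hF hη' hF' (fun M hz => (h M).mpr hz)
    have h2 : IsIso (lwhisk F' η) := aux8 η hF' hη hF (fun M hz => (h M).mp hz)
    refine ⟨asIso (lwhisk F η') ≪≫ β_ F F' ≪≫ (asIso (lwhisk F' η)).symm, ?_⟩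
    simp only [Iso.trans_hom, asIso_hom, Iso.symm_hom, asIso_inv]
    simp only [← Category.assoc]
    rw [IsIso.comp_inv_eq, Category.assoc, aux8' η η']
end
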